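/- For r ≥ 2 and n ≥ 1, the affine hypersurface in ℂ^{n+2} with coordinates (t, w_0, …, w_n) defined by t^r w_i^{r−2} = w_0^2 + ⋯ + w_{i−1}^2 + 1 + w_{i+1}^2 + ⋯ + w_n^2 is smooth: at every point of the hypersurface, not all partial derivatives of the defining polynomial vanish. -/

import Mathlib

/-- For `r ≥ 2`, `n ≥ 1` and a fixed index `i`, the affine
hypersurface `t^r w_i^{r-2} = Σ_{j ≠ i} w_j^2 + 1` in `ℂ^{n+2}` is smooth: at every
point of the hypersurface, the partial derivatives `r t^{r-1} w_i^{r-2}`,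
`(r-2) t^r w_i^{r-3}` and `-2 w_j` (`j ≠ i`) of the defining polynomial do not all
vanish. -/
theorem stmt_2 (n r : ℕ) (hr : 2 ≤ r) (hn : 1 ≤ n) (i : Fin (n + 1)) (t : ℂ)
    (w : Fin (n + 1) → ℂ)
    (hg : t ^ r * w i ^ (r - 2) = (∑ j ∈ Finset.univ.erase i, w j ^ 2) + 1) :
    ¬ ((r : ℂ) * t ^ (r - 1) * w i ^ (r - 2) = 0 ∧
        ((r - 2 : ℕ) : ℂ) * t ^ r * w i ^ (r - 3) = 0 ∧
        ∀ j, j ≠ i → -(2 : ℂ) * w j = 0) := by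
  rintro ⟨h1, -, h3⟩
  have hw : ∀ j ∈ Finset.univ.erase i, w j ^ 2 = 0 := by
    intro j hj
    have hji : j ≠ i := (Finset.mem_erase.mp hj).1
    have := h3 j hji
    have hwj : w j = 0 := by
      have h2 : (2 : ℂ) ≠ 0 := by norm_num
      field_simp at this
      exact (mul_eq_zero.mp (neg_eq_zero.mp this)).resolve_left h2
    simp [hwj]
  have hsum : (∑ j ∈ Finset.univ.erase i, w j ^ 2) = 0 := Finset.sum_eq_zero hw
  rw [hsum, zero_add] at hg
  have ht : t ≠ 0 := by
    intro h
    rw [h, zero_pow (by omega : r ≠ 0), zero_mul] at hg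
    exact zero_ne_one hg
  have hwi : w i ^ (r - 2) ≠ 0 := fun h => by simp [h] at hg
  have : (r : ℂ) ≠ 0 := Nat.cast_ne_zero.mpr (by omega)
  exact hwi (by
    have := mul_eq_zero.mp h1
    rcases this with h | h
    · rcases mul_eq_zero.mp h with h | h
      · exact absurd h ‹(r : ℂ) ≠ 0›
      · exact absurd h (pow_ne_zero _ ht)
    · exact h)
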